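/- The second Leibniz cohomology group HL²(NF^n, NF^n) = ZL²(NF^n,NF^n)/BL²(NF^n,NF^n) has dimension n - 1; moreover the classes of the cocycles φ_{n,k} (2 ≤ k ≤ n), where φ_{n,k}(x_n, x_1) = x_k and φ_{n,k} vanishes on all other pairs of basis elements, form a basis of HL²(NF^n, NF^n). -/

import Mathlib

variable (K : Type*) [Field K] [CharZero K]

/-- The bracket of the null-filiform Leibniz algebra `NF^n` in the (zero-indexed)
basis `x_{i+1} = Pi.single i 1`: `[x_i, x_1] = x_{i+1}`, all other products of
basis vectors zero. -/
def nfF (n : ℕ) (u v : Fin n → K) : Fin n → K :=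
  fun k => if h : 0 < (k : ℕ) then
    v ⟨0, k.pos⟩ * u ⟨(k : ℕ) - 1, lt_of_le_of_lt (Nat.sub_le _ _) k.isLt⟩
  else 0

/-- The bracket of `NF^n` as a bilinear map. -/
noncomputable def nfb (n : ℕ) :
    (Fin n → K) →ₗ[K] (Fin n → K) →ₗ[K] (Fin n → K) :=
  LinearMap.mk₂ K (nfF K n)
    (fun u u' v => by funext k; simp only [nfF, Pi.add_apply]; split_ifs <;> ring)
    (fun c u v => by
      funext k; simp only [nfF, Pi.smul_apply, smul_eq_mul]; split_ifs <;> ring)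
    (fun u v v' => by funext k; simp only [nfF, Pi.add_apply]; split_ifs <;> ring)
    (fun c u v => by
      funext k; simp only [nfF, Pi.smul_apply, smul_eq_mul]; split_ifs <;> ring)

/-- The Leibniz 2-cocycle condition `d²φ = 0` on `NF^n` with coefficients in itself. -/
def IsCocycle (n : ℕ) (φ : (Fin n → K) →ₗ[K] (Fin n → K) →ₗ[K] (Fin n → K)) : Prop :=
  ∀ x y z : Fin n → K,
    nfb K n x (φ y z) - nfb K n (φ x y) z + nfb K n (φ x z) y
      + φ x (nfb K n y z) - φ (nfb K n x y) z + φ (nfb K n x z) y = 0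

/-- The space `ZL²(NF^n, NF^n)` of Leibniz 2-cocycles. -/
noncomputable def ZL2 (n : ℕ) :
    Submodule K ((Fin n → K) →ₗ[K] (Fin n → K) →ₗ[K] (Fin n → K)) where
  carrier := {φ | IsCocycle K n φ}
  add_mem' := by
    intro φ ψ hφ hψ x y z
    have h1 := hφ x y z
    have h2 := hψ x y z
    simp only [LinearMap.add_apply, map_add] at *
    linear_combination h1 + h2
  zero_mem' := by intro x y z; simp
  smul_mem' := by
    intro c φ hφ x y z
    have h := hφ x y z
    simp only [LinearMap.smul_apply, map_smul] at *
    linear_combination (norm := module) c • h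

/-- The space `BL²(NF^n, NF^n)` of Leibniz 2-coboundaries
`d¹f (x,y) = f [x,y] - [f x, y] - [x, f y]`. -/
noncomputable def BL2 (n : ℕ) :
    Submodule K ((Fin n → K) →ₗ[K] (Fin n → K) →ₗ[K] (Fin n → K)) where
  carrier := {ψ | ∃ f : (Fin n → K) →ₗ[K] (Fin n → K),
    ∀ x y : Fin n → K, ψ x y = f (nfb K n x y) - nfb K n (f x) y - nfb K n x (f y)}
  add_mem' := by
    rintro ψ χ ⟨f, hf⟩ ⟨g, hg⟩
    refine ⟨f + g, fun x y => ?_⟩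
    simp only [LinearMap.add_apply, map_add, hf x y, hg x y]
    abel
  zero_mem' := ⟨0, by simp⟩
  smul_mem' := by
    rintro c ψ ⟨f, hf⟩
    refine ⟨c • f, fun x y => ?_⟩
    simp only [LinearMap.smul_apply, map_smul, hf x y, smul_sub]

set_option synthInstance.maxHeartbeats 1000000
set_option maxHeartbeats 1000000

/-- An auxiliary `AddCommGroup` instance on submodules of the space of bilinear maps
(the canonical one times out for this doubly-nested type). -/
noncomputable instance instACG (n : ℕ)
    (p : Submodule K ((Fin n → K) →ₗ[K] (Fin n → K) →ₗ[K] (Fin n → K))) :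
    AddCommGroup p := Module.addCommMonoidToAddCommGroup K

/-! ### Auxiliary development -/
set_option linter.unusedVariables false
set_option linter.unusedSectionVars false

/-- `EE j` is the `j`-th basis vector (`0`-indexed), or `0` if `j ≥ n`. -/
noncomputable def EE (n j : ℕ) : Fin n → K :=
  if h : j < n then Pi.single ⟨j, h⟩ 1 else 0

lemma EE_apply (n j : ℕ) (k : Fin n) :
    EE K n j k = if (k : ℕ) = j then 1 else 0 := by
  unfold EE
  by_cases h : j < n
  · rw [dif_pos h, Pi.single_apply]
    simp [Fin.ext_iff]
  · rw [dif_neg h, Pi.zero_apply, if_neg (by omega)]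

/-- The shift map `S` : `e_j ↦ e_{j+1}`. -/
noncomputable def SS (n : ℕ) : (Fin n → K) →ₗ[K] (Fin n → K) where
  toFun x := fun k => if h : 0 < (k : ℕ) then x ⟨(k : ℕ) - 1, by omega⟩ else 0
  map_add' x y := by funext k; simp only [Pi.add_apply]; split_ifs <;> simp
  map_smul' c x := by
    funext k; simp only [Pi.smul_apply, smul_eq_mul, RingHom.id_apply]
    split_ifs <;> simp

lemma SS_apply (n : ℕ) (x : Fin n → K) (k : Fin n) :
    SS K n x k = if h : 0 < (k : ℕ) then x ⟨(k : ℕ) - 1, by omega⟩ else 0 := rfl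

lemma SS_apply_zero (n : ℕ) (x : Fin n → K) (h : 0 < n) :
    SS K n x ⟨0, h⟩ = 0 := by
  rw [SS_apply]; simp

lemma SS_EE (n j : ℕ) : SS K n (EE K n j) = EE K n (j + 1) := by
  funext k
  simp only [SS_apply, EE_apply, Fin.val_mk]
  split_ifs <;> first | rfl | omega

lemma nfb_eq (n : ℕ) (h : 0 < n) (x v : Fin n → K) :
    nfb K n x v = v ⟨0, h⟩ • SS K n x := by
  funext k
  simp only [nfb, LinearMap.mk₂_apply, nfF, Pi.smul_apply, smul_eq_mul, SS_apply]
  split_ifs with h1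
  · rfl
  · rw [mul_zero]

lemma single_eq_EE (n : ℕ) (i : Fin n) : Pi.single i (1:K) = EE K n (i : ℕ) := by
  rw [EE, dif_pos i.isLt]

lemma EE_applyz (n j : ℕ) (h : 0 < n) (hj : j ≠ 0) : EE K n j ⟨0, h⟩ = 0 := by
  rw [EE_apply]
  exact if_neg (fun he => hj he.symm)
/-- The cocycle `φ_{n,r}` : `(x,y) ↦ y₀ x_{n-1} e_r`. -/
noncomputable def cme (n r : ℕ) :
    (Fin n → K) →ₗ[K] (Fin n → K) →ₗ[K] (Fin n → K) :=
  LinearMap.mk₂ K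
    (fun x y => (if h : 0 < n then y ⟨0, h⟩ * x ⟨n-1, by omega⟩ else 0) • EE K n r)
    (fun x x' y => by
      by_cases h : 0 < n
      · simp only [dif_pos h, Pi.add_apply, mul_add, add_smul]
      · simp [dif_neg h])
    (fun c x y => by
      by_cases h : 0 < n
      · simp only [dif_pos h, Pi.smul_apply, smul_eq_mul, smul_smul]; ring_nf
      · simp [dif_neg h])
    (fun x y y' => by
      by_cases h : 0 < n
      · simp only [dif_pos h, Pi.add_apply, add_mul, add_smul]
      · simp [dif_neg h])
    (fun c x y => by
      by_cases h : 0 < n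
      · simp only [dif_pos h, Pi.smul_apply, smul_eq_mul, smul_smul]; ring_nf
      · simp [dif_neg h])

lemma cme_apply (n r : ℕ) (h : 0 < n) (x y : Fin n → K) :
    cme K n r x y = (y ⟨0, h⟩ * x ⟨n-1, by omega⟩) • EE K n r := by
  simp only [cme, LinearMap.mk₂_apply, dif_pos h]

lemma cme_cocycle (n r : ℕ) (hr : r ≠ 0) : IsCocycle K n (cme K n r) := by
  intro x y z
  by_cases h0 : 0 < n
  · simp only [nfb_eq K n h0, cme_apply K n r h0, map_smul, Pi.smul_apply,
      LinearMap.smul_apply, smul_eq_mul, SS_apply_zero, EE_applyz K n r h0 hr, mul_zero, zero_mul,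
      zero_smul, smul_zero, map_zero]
    match_scalars <;> ring
  · funext k; exact absurd k.isLt (by omega)
lemma EE_at00 (n : ℕ) (h : 0 < n) : EE K n 0 ⟨0, h⟩ = 1 := by
  rw [EE_apply]; simp

lemma EE_top (n : ℕ) : EE K n n = 0 := by
  rw [EE, dif_neg (lt_irrefl n)]

lemma coc_Q (n : ℕ) (φ : (Fin n → K) →ₗ[K] (Fin n → K) →ₗ[K] (Fin n → K))
    (hφ : IsCocycle K n φ) (x y : Fin n → K) :
    nfb K n x (φ y y) + φ x (nfb K n y y) = 0 := by
  linear_combination (norm := module) hφ x y y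

lemma coc_T2 (n : ℕ) (hn : 2 ≤ n)
    (φ : (Fin n → K) →ₗ[K] (Fin n → K) →ₗ[K] (Fin n → K))
    (hφ : IsCocycle K n φ) (x y : Fin n → K) :
    ((φ y (EE K n 0)) ⟨0, by omega⟩ + (φ (EE K n 0) y) ⟨0, by omega⟩) • SS K n x
      + φ x (SS K n y) + (y ⟨0, by omega⟩) • φ x (EE K n 1) = 0 := by
  have h0 : 0 < n := by omega
  have q1 := coc_Q K n φ hφ x (y + EE K n 0)
  have q2 := coc_Q K n φ hφ x y
  have q3 := coc_Q K n φ hφ x (EE K n 0)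
  simp only [map_add, LinearMap.add_apply] at q1
  have key : nfb K n x (φ y (EE K n 0)) + nfb K n x (φ (EE K n 0) y)
      + φ x (nfb K n y (EE K n 0)) + φ x (nfb K n (EE K n 0) y) = 0 := by
    linear_combination (norm := module) q1 - q2 - q3
  simp only [nfb_eq K n h0, EE_at00, one_smul, SS_EE, Nat.reduceAdd, map_smul] at key
  linear_combination (norm := module) key

lemma coc_T3 (n : ℕ) (hn : 2 ≤ n)
    (φ : (Fin n → K) →ₗ[K] (Fin n → K) →ₗ[K] (Fin n → K))
    (hφ : IsCocycle K n φ) (x : Fin n → K) :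
    φ x (EE K n 1) = -((φ (EE K n 0) (EE K n 0)) ⟨0, by omega⟩) • SS K n x := by
  have h0 : 0 < n := by omega
  have h := coc_T2 K n hn φ hφ x (EE K n 0)
  simp only [SS_EE, Nat.reduceAdd, EE_at00, one_smul] at h
  have h2 : (2:K) • (φ x (EE K n 1)
      + ((φ (EE K n 0) (EE K n 0)) ⟨0, h0⟩) • SS K n x) = 0 := by
    linear_combination (norm := module) h
  have h3 := (smul_eq_zero.mp h2).resolve_left (two_ne_zero)
  linear_combination (norm := module) h3

lemma coc_alpha (n : ℕ) (hn : 2 ≤ n)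
    (φ : (Fin n → K) →ₗ[K] (Fin n → K) →ₗ[K] (Fin n → K))
    (hφ : IsCocycle K n φ) (j : ℕ) (hj : 1 ≤ j) :
    (φ (EE K n 0) (EE K n j)) ⟨0, by omega⟩ = 0 := by
  have h0 : 0 < n := by omega
  rcases eq_or_lt_of_le hj with h1 | h2
  · have h := coc_T3 K n hn φ hφ (EE K n 0)
    rw [← h1]
    have := congrFun h ⟨0, h0⟩
    simpa [SS_apply_zero] using this
  · have h := coc_T2 K n hn φ hφ (EE K n 0) (EE K n (j-1))
    have hj1 : j - 1 + 1 = j := by omega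
    simp only [SS_EE, Nat.reduceAdd] at h
    rw [hj1, EE_applyz K n (j-1) h0 (by omega), zero_smul, add_zero] at h
    have := congrFun h ⟨0, h0⟩
    simpa [EE_applyz K n 1 h0 one_ne_zero] using this

lemma coc_F1 (n : ℕ) (hn : 2 ≤ n)
    (φ : (Fin n → K) →ₗ[K] (Fin n → K) →ₗ[K] (Fin n → K))
    (hφ : IsCocycle K n φ) (j : ℕ) (hj : 1 ≤ j) (x : Fin n → K) :
    φ x (EE K n j) = -((φ (EE K n (j-1)) (EE K n 0)) ⟨0, by omega⟩) • SS K n x := by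
  have h0 : 0 < n := by omega
  rcases eq_or_lt_of_le hj with h1 | h2
  · rw [← h1]; exact coc_T3 K n hn φ hφ x
  · have h := coc_T2 K n hn φ hφ x (EE K n (j-1))
    have hj1 : j - 1 + 1 = j := by omega
    rw [SS_EE K n (j-1), hj1, EE_applyz K n (j-1) h0 (by omega), zero_smul, add_zero,
      coc_alpha K n hn φ hφ (j-1) (by omega), add_zero] at h
    linear_combination (norm := module) h

lemma coc_L2 (n : ℕ) (hn : 2 ≤ n)
    (φ : (Fin n → K) →ₗ[K] (Fin n → K) →ₗ[K] (Fin n → K))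
    (hφ : IsCocycle K n φ) :
    (φ (EE K n (n-1)) (EE K n 0)) ⟨0, by omega⟩ = 0 := by
  have h0 : 0 < n := by omega
  have h := hφ (EE K n 0) (EE K n (n-1)) (EE K n 0)
  have hS : SS K n (EE K n (n-1)) = 0 := by
    rw [SS_EE, show n - 1 + 1 = n by omega, EE_top]
  simp only [nfb_eq K n h0, EE_at00, one_smul,
    EE_applyz K n (n-1) h0 (by omega), zero_smul, map_zero, smul_zero,
    LinearMap.zero_apply, hS, SS_EE, Nat.reduceAdd] at h
  rw [coc_F1 K n hn φ hφ (n-1) (by omega) (EE K n 0),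
      coc_F1 K n hn φ hφ (n-1) (by omega) (EE K n 1)] at h
  simp only [SS_EE, Nat.reduceAdd, map_smul, map_neg, neg_smul] at h
  have hv : ((φ (EE K n (n-1)) (EE K n 0)) ⟨0, h0⟩) • EE K n 1 = 0 := by
    linear_combination (norm := module) h
  have := congrFun hv ⟨1, by omega⟩
  simpa [SS_EE, Nat.reduceAdd, EE_apply] using this
/-- Recursive column construction: `wrG G 0 = 0`, `wrG G (j+1) = G j + S (wrG G j)`. -/
noncomputable def wrG (n : ℕ) (G : ℕ → Fin n → K) : ℕ → Fin n → K
  | 0 => 0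
  | (j+1) => G j + SS K n (wrG n G j)

lemma wrG_zero (n : ℕ) (G : ℕ → Fin n → K) : wrG K n G 0 = 0 := rfl

lemma wrG_succ (n : ℕ) (G : ℕ → Fin n → K) (j : ℕ) :
    wrG K n G (j+1) = G j + SS K n (wrG K n G j) := rfl

lemma wrG_at (n : ℕ) (G : ℕ → Fin n → K) {j m : ℕ} (h : j = m + 1) :
    wrG K n G j = G m + SS K n (wrG K n G m) := by rw [h, wrG_succ]

lemma wrG_congr (n : ℕ) {G G' : ℕ → Fin n → K} (h : ∀ j, G j = G' j) (j : ℕ) :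
    wrG K n G j = wrG K n G' j := by
  induction j with
  | zero => rfl
  | succ j ih => rw [wrG_succ, wrG_succ, h, ih]

lemma SS_pow_apply (n j : ℕ) (x : Fin n → K) (k : Fin n) :
    ((SS K n ^ j) x) k = if h : j ≤ (k:ℕ) then x ⟨(k:ℕ) - j, by omega⟩ else 0 := by
  induction j generalizing x k with
  | zero =>
    rw [pow_zero, Module.End.one_apply, dif_pos (Nat.zero_le _)]
    congr 1
    try exact Fin.ext (by simp)
  | succ j ih =>
    rw [pow_succ, Module.End.mul_apply, ih]
    simp only [SS_apply, Fin.val_mk]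
    split_ifs <;>
      first
        | rfl
        | omega
        | (congr 1; exact Fin.ext (by simp only [Fin.val_mk]; omega))

lemma SS_pow_top (n : ℕ) (x : Fin n → K) : (SS K n ^ n) x = 0 := by
  funext k
  rw [SS_pow_apply, dif_neg (by omega)]
  rfl

/-- The linear map with columns `wrG (Gof φ) j`. -/
noncomputable def fB (n : ℕ) (G : ℕ → Fin n → K) : (Fin n → K) →ₗ[K] (Fin n → K) where
  toFun x := ∑ j : Fin n, x j • wrG K n G (j:ℕ)
  map_add' x y := by
    simp only [Pi.add_apply, add_smul, Finset.sum_add_distrib]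
  map_smul' c x := by
    simp only [Pi.smul_apply, smul_eq_mul, RingHom.id_apply, Finset.smul_sum, smul_smul]

lemma fB_EE (n : ℕ) (G : ℕ → Fin n → K) (j : ℕ) (hj : j < n) :
    fB K n G (EE K n j) = wrG K n G j := by
  show ∑ i : Fin n, EE K n j i • wrG K n G (i:ℕ) = wrG K n G j
  rw [Finset.sum_eq_single (⟨j, hj⟩ : Fin n)]
  · simp [EE_apply]
  · intro b _ hb
    rw [EE_apply, if_neg (fun h => hb (Fin.ext (by simpa using h))), zero_smul]
  · intro h; exact absurd (Finset.mem_univ _) h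

lemma nfb_E0 (n : ℕ) (h0 : 0 < n) (x : Fin n → K) :
    nfb K n x (EE K n 0) = SS K n x := by
  rw [nfb_eq K n h0, EE_at00, one_smul]
/-- The column data of a cocycle. -/
noncomputable def Gof (n : ℕ) (φ : (Fin n → K) →ₗ[K] (Fin n → K) →ₗ[K] (Fin n → K)) :
    ℕ → Fin n → K := fun j => φ (EE K n j) (EE K n 0)

/-- The vector of obstruction coefficients. -/
noncomputable def vv (n : ℕ) (φ : (Fin n → K) →ₗ[K] (Fin n → K) →ₗ[K] (Fin n → K)) :
    Fin n → K := wrG K n (Gof K n φ) n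

lemma wr_z0 (n : ℕ) (h0 : 0 < n) (φ : (Fin n → K) →ₗ[K] (Fin n → K) →ₗ[K] (Fin n → K))
    {j m : ℕ} (hj : j = m + 1) :
    wrG K n (Gof K n φ) j ⟨0, h0⟩ = (φ (EE K n m) (EE K n 0)) ⟨0, h0⟩ := by
  rw [wrG_at K n _ hj, Pi.add_apply, SS_apply_zero, add_zero, Gof]

lemma vv_z0 (n : ℕ) (hn : 2 ≤ n) (φ : (Fin n → K) →ₗ[K] (Fin n → K) →ₗ[K] (Fin n → K))
    (hφ : IsCocycle K n φ) : vv K n φ ⟨0, by omega⟩ = 0 := by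
  rw [vv, wr_z0 K n (by omega) φ (show n = (n-1) + 1 by omega)]
  exact coc_L2 K n hn φ hφ

lemma vv_sum (n : ℕ) (hn : 2 ≤ n) (φ : (Fin n → K) →ₗ[K] (Fin n → K) →ₗ[K] (Fin n → K))
    (hφ : IsCocycle K n φ) :
    ∑ k : Fin (n-1), (vv K n φ ⟨(k:ℕ)+1, by omega⟩) • EE K n ((k:ℕ)+1) = vv K n φ := by
  have h0 : 0 < n := by omega
  funext l
  rw [Finset.sum_apply]
  by_cases hl : (l:ℕ) = 0
  · have hl' : l = ⟨0, h0⟩ := Fin.ext hl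
    rw [hl', vv_z0 K n hn φ hφ]
    apply Finset.sum_eq_zero
    intro k _
    rw [Pi.smul_apply, EE_applyz K n _ h0 (Nat.succ_ne_zero _), smul_zero]
  · rw [Finset.sum_eq_single (⟨(l:ℕ)-1, by omega⟩ : Fin (n-1))]
    · rw [Pi.smul_apply, EE_apply, if_pos (by simp; omega), smul_eq_mul, mul_one]
      congr 1
      exact Fin.ext (by simp; omega)
    · intro b _ hb
      rw [Pi.smul_apply, EE_apply, if_neg, smul_zero]
      intro hc
      exact hb (Fin.ext (by simp; omega))
    · intro h; exact absurd (Finset.mem_univ _) h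

/-- The coboundary of a linear map, as a bilinear map. -/
noncomputable def dfm (n : ℕ) (f : (Fin n → K) →ₗ[K] (Fin n → K)) :
    (Fin n → K) →ₗ[K] (Fin n → K) →ₗ[K] (Fin n → K) :=
  LinearMap.mk₂ K
    (fun x y => f (nfb K n x y) - nfb K n (f x) y - nfb K n x (f y))
    (fun x x' y => by
      simp only [map_add, LinearMap.add_apply]; abel)
    (fun c x y => by
      simp only [map_smul, LinearMap.smul_apply, smul_sub])
    (fun x y y' => by
      simp only [map_add, LinearMap.add_apply]; abel)
    (fun c x y => by
      simp only [map_smul, LinearMap.smul_apply, smul_sub])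

lemma dfm_apply (n : ℕ) (f : (Fin n → K) →ₗ[K] (Fin n → K)) (x y : Fin n → K) :
    dfm K n f x y = f (nfb K n x y) - nfb K n (f x) y - nfb K n x (f y) := rfl

/-- Coboundaries have vanishing obstruction vector. -/
lemma wr_cob (n : ℕ) (hn : 2 ≤ n) (f : (Fin n → K) →ₗ[K] (Fin n → K)) (j : ℕ) :
    wrG K n (Gof K n (dfm K n f)) j
      = f (EE K n j) - (SS K n ^ j) (f (EE K n 0))
        - ((j:K) * (f (EE K n 0)) ⟨0, by omega⟩) • EE K n j := by
  have h0 : 0 < n := by omega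
  induction j with
  | zero =>
    rw [wrG_zero, pow_zero, Module.End.one_apply]
    simp
  | succ j ih =>
    rw [wrG_succ, ih, Gof, dfm_apply, nfb_E0 K n h0, nfb_E0 K n h0,
      nfb_eq K n h0 (EE K n j) (f (EE K n 0)), SS_EE]
    have hp : (SS K n ^ (j+1)) (f (EE K n 0)) = SS K n ((SS K n ^ j) (f (EE K n 0))) := by
      rw [pow_succ', Module.End.mul_apply]
    rw [hp]
    simp only [map_sub, map_smul, SS_EE]
    match_scalars <;> push_cast <;> ring

lemma vv_cob (n : ℕ) (hn : 2 ≤ n) (f : (Fin n → K) →ₗ[K] (Fin n → K)) :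
    wrG K n (Gof K n (dfm K n f)) n = 0 := by
  rw [wr_cob K n hn f n, EE_top, map_zero, SS_pow_top]
  simp

/-- The obstruction vector of a combination of the special cocycles. -/
lemma vv_sum_cme (n : ℕ) (hn : 2 ≤ n) (g : Fin (n-1) → K) :
    wrG K n (Gof K n (∑ k : Fin (n-1), g k • cme K n ((k:ℕ)+1))) n
      = ∑ k : Fin (n-1), g k • EE K n ((k:ℕ)+1) := by
  have h0 : 0 < n := by omega
  have hG : ∀ j : ℕ, Gof K n (∑ k : Fin (n-1), g k • cme K n ((k:ℕ)+1)) j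
      = (EE K n j ⟨n-1, by omega⟩) • ∑ k : Fin (n-1), g k • EE K n ((k:ℕ)+1) := by
    intro j
    rw [Gof]
    simp only [LinearMap.coe_sum, LinearMap.sum_apply, LinearMap.smul_apply,
      Finset.sum_apply, Pi.smul_apply, cme_apply K n _ h0, EE_at00, one_mul,
      Finset.smul_sum, smul_smul]
    apply Finset.sum_congr rfl
    intro k _
    rw [mul_comm]
  have haux : ∀ j : ℕ, j ≤ n - 1 → wrG K n (Gof K n (∑ k : Fin (n-1), g k • cme K n ((k:ℕ)+1))) j = 0 := by
    intro j
    induction j with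
    | zero => intro _; rfl
    | succ j ih =>
      intro hj
      rw [wrG_succ, ih (by omega), map_zero, add_zero, hG]
      simp only [EE_apply, Fin.val_mk]
      rw [if_neg (by omega), zero_smul]
  rw [wrG_at K n _ (show n = (n-1) + 1 by omega), haux (n-1) le_rfl, map_zero, add_zero, hG]
  simp only [EE_apply, Fin.val_mk]
  simp
lemma single_scalar (n : ℕ) (i : Fin n) (a : K) :
    Pi.single i a = a • EE K n (i:ℕ) := by
  funext k
  rw [Pi.single_apply, Pi.smul_apply, EE_apply, smul_eq_mul]
  by_cases h : k = i
  · rw [if_pos h, if_pos (by rw [h]), mul_one]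
  · rw [if_neg h, if_neg (fun hc => h (Fin.ext hc)), mul_zero]

lemma coc_decomp_basis (n : ℕ) (hn : 2 ≤ n)
    (φ : (Fin n → K) →ₗ[K] (Fin n → K) →ₗ[K] (Fin n → K))
    (hφ : IsCocycle K n φ) (a b : ℕ) (ha : a < n) (hb : b < n) :
    φ (EE K n a) (EE K n b)
      - (∑ k : Fin (n-1), (vv K n φ ⟨(k:ℕ)+1, by omega⟩) • cme K n ((k:ℕ)+1))
          (EE K n a) (EE K n b)
      = dfm K n (fB K n (Gof K n φ)) (EE K n a) (EE K n b) := by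
  have h0 : 0 < n := by omega
  rw [dfm_apply]
  rcases Nat.eq_zero_or_pos b with hb0 | hb1
  · subst hb0
    have hsum : (∑ k : Fin (n-1), (vv K n φ ⟨(k:ℕ)+1, by omega⟩) • cme K n ((k:ℕ)+1))
        (EE K n a) (EE K n 0) = (EE K n a ⟨n-1, by omega⟩) • vv K n φ := by
      have step : (∑ k : Fin (n-1), (vv K n φ ⟨(k:ℕ)+1, by omega⟩) • cme K n ((k:ℕ)+1))
          (EE K n a) (EE K n 0)
          = (EE K n a ⟨n-1, by omega⟩)
            • ∑ k : Fin (n-1), (vv K n φ ⟨(k:ℕ)+1, by omega⟩) • EE K n ((k:ℕ)+1) := by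
        rw [Finset.smul_sum]
        simp only [LinearMap.coe_sum, LinearMap.sum_apply, LinearMap.smul_apply,
          Finset.sum_apply, cme_apply K n _ h0, EE_at00, one_mul, smul_smul]
        apply Finset.sum_congr rfl
        intro k _
        rw [mul_comm]
      rw [step, vv_sum K n hn φ hφ]
    rw [hsum, nfb_E0 K n h0, nfb_E0 K n h0, fB_EE K n _ 0 h0, wrG_zero, map_zero,
      sub_zero, SS_EE]
    rcases Nat.lt_or_ge a (n-1) with ha2 | ha2
    · rw [EE_apply, if_neg (by simp; omega), zero_smul, sub_zero,
        fB_EE K n _ (a+1) (by omega), fB_EE K n _ a (by omega), wrG_succ]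
      have : Gof K n φ a = φ (EE K n a) (EE K n 0) := rfl
      rw [this]
      abel
    · have ha3 : a = n - 1 := by omega
      subst ha3
      rw [EE_apply, if_pos (by simp), one_smul, show n - 1 + 1 = n by omega, EE_top,
        map_zero, zero_sub, fB_EE K n _ (n-1) (by omega), vv,
        wrG_at K n _ (show n = (n-1) + 1 by omega)]
      have : Gof K n φ (n-1) = φ (EE K n (n-1)) (EE K n 0) := rfl
      rw [this]
      abel
  · rw [coc_F1 K n hn φ hφ b (by omega)]
    have hbz : EE K n b ⟨0, h0⟩ = 0 := EE_applyz K n b h0 (by omega)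
    simp only [LinearMap.coe_sum, LinearMap.sum_apply, LinearMap.smul_apply,
      Finset.sum_apply, cme_apply K n _ h0, hbz, zero_mul, zero_smul, smul_zero,
      Finset.sum_const_zero, sub_zero]
    rw [nfb_eq K n h0 (EE K n a) (EE K n b), nfb_eq K n h0 _ (EE K n b),
      nfb_eq K n h0 (EE K n a) _, hbz, zero_smul, zero_smul, map_zero,
      fB_EE K n _ b hb, wr_z0 K n h0 φ (show b = (b-1) + 1 by omega)]
    module

lemma coc_decomp (n : ℕ) (hn : 2 ≤ n)
    (φ : (Fin n → K) →ₗ[K] (Fin n → K) →ₗ[K] (Fin n → K))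
    (hφ : IsCocycle K n φ) :
    φ - ∑ k : Fin (n-1), (vv K n φ ⟨(k:ℕ)+1, by omega⟩) • cme K n ((k:ℕ)+1)
      = dfm K n (fB K n (Gof K n φ)) := by
  apply LinearMap.pi_ext
  intro i xx
  apply LinearMap.pi_ext
  intro j yy
  rw [single_scalar, single_scalar]
  simp only [map_smul, LinearMap.smul_apply, LinearMap.sub_apply]
  rw [show φ (EE K n (i:ℕ)) (EE K n (j:ℕ))
        - (∑ k : Fin (n-1), (vv K n φ ⟨(k:ℕ)+1, by omega⟩) • cme K n ((k:ℕ)+1))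
            (EE K n (i:ℕ)) (EE K n (j:ℕ))
      = dfm K n (fB K n (Gof K n φ)) (EE K n (i:ℕ)) (EE K n (j:ℕ)) from
    coc_decomp_basis K n hn φ hφ (i:ℕ) (j:ℕ) i.isLt j.isLt]

/-- `HL²(NF^n, NF^n) = ZL²/BL²` has dimension `n - 1`, and the classes
of the cocycles `φ_{n,k}` (`2 ≤ k ≤ n`), where `φ_{n,k}(x_n, x_1) = x_k` and `φ_{n,k}`
vanishes on all other pairs of basis vectors, form a basis of `HL²(NF^n, NF^n)`. -/
theorem dim_HL2 (n : ℕ) (hn : 2 ≤ n) :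
    Module.finrank K ((ZL2 K n) ⧸ (Submodule.comap (ZL2 K n).subtype (BL2 K n))) = n - 1 ∧
    ∃ c : Fin (n - 1) → ZL2 K n,
      (∀ k : Fin (n - 1), ∀ i j : Fin n,
        ((c k : (Fin n → K) →ₗ[K] (Fin n → K) →ₗ[K] (Fin n → K))
            (Pi.single i 1)) (Pi.single j 1) =
          if (i : ℕ) = n - 1 ∧ (j : ℕ) = 0 then
            Pi.single (⟨(k : ℕ) + 1, by have := k.isLt; omega⟩ : Fin n) (1 : K)
          else 0) ∧
      LinearIndependent K (fun k : Fin (n - 1) =>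
        Submodule.Quotient.mk (p := Submodule.comap (ZL2 K n).subtype (BL2 K n)) (c k)) ∧
      Submodule.span K (Set.range (fun k : Fin (n - 1) =>
        Submodule.Quotient.mk (p := Submodule.comap (ZL2 K n).subtype (BL2 K n)) (c k))) = ⊤ := by
  have h0 : 0 < n := by omega
  set p := Submodule.comap (ZL2 K n).subtype (BL2 K n) with hp
  let cc : Fin (n-1) → ZL2 K n := fun k =>
    ⟨cme K n ((k:ℕ)+1), cme_cocycle K n ((k:ℕ)+1) (Nat.succ_ne_zero _)⟩
  -- values on basis vectors
  have hval : ∀ k : Fin (n - 1), ∀ i j : Fin n,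
      ((cc k : (Fin n → K) →ₗ[K] (Fin n → K) →ₗ[K] (Fin n → K))
          (Pi.single i 1)) (Pi.single j 1) =
        if (i : ℕ) = n - 1 ∧ (j : ℕ) = 0 then
          Pi.single (⟨(k : ℕ) + 1, by have := k.isLt; omega⟩ : Fin n) (1 : K)
        else 0 := by
    intro k i j
    show cme K n ((k:ℕ)+1) (Pi.single i 1) (Pi.single j 1) = _
    rw [single_eq_EE, single_eq_EE, cme_apply K n _ h0]
    by_cases hj : (j:ℕ) = 0
    · by_cases hi : (i:ℕ) = n-1
      · have e1 : EE K n (j:ℕ) ⟨0, h0⟩ = 1 := by rw [hj, EE_at00]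
        have e2 : EE K n (i:ℕ) ⟨n-1, by omega⟩ = 1 := by
          rw [EE_apply, if_pos (by simp; omega)]
        rw [if_pos ⟨hi, hj⟩, e1, e2, one_mul, one_smul, single_eq_EE]
      · have e2 : EE K n (i:ℕ) ⟨n-1, by omega⟩ = 0 := by
          rw [EE_apply, if_neg (by simp; omega)]
        rw [if_neg (by tauto), e2, mul_zero, zero_smul]
    · have e1 : EE K n (j:ℕ) ⟨0, h0⟩ = 0 := EE_applyz K n _ h0 hj
      rw [if_neg (by tauto), e1, zero_mul, zero_smul]
  -- linear independence
  have hind : LinearIndependent K (fun k : Fin (n - 1) =>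
      Submodule.Quotient.mk (p := p) (cc k)) := by
    rw [Fintype.linearIndependent_iff]
    intro g hg k0
    have h1 : Submodule.Quotient.mk (p := p) (∑ k, g k • cc k) = 0 := by
      rw [← Submodule.mkQ_apply, map_sum]
      simp only [map_smul, Submodule.mkQ_apply]
      exact hg
    have hmem : (∑ k, g k • cc k) ∈ p := (Submodule.Quotient.mk_eq_zero p).mp h1
    rw [hp, Submodule.mem_comap] at hmem
    obtain ⟨f, hf⟩ := hmem
    have hcoe : (ZL2 K n).subtype (∑ k, g k • cc k)
        = ∑ k : Fin (n-1), g k • cme K n ((k:ℕ)+1) := by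
      rw [map_sum]
      simp only [map_smul]
      rfl
    rw [hcoe] at hf
    have hG : ∀ j : ℕ, Gof K n (∑ k : Fin (n-1), g k • cme K n ((k:ℕ)+1)) j
        = Gof K n (dfm K n f) j := by
      intro j
      rw [Gof, Gof, dfm_apply]
      exact hf _ _
    have h2 : (∑ k : Fin (n-1), g k • EE K n ((k:ℕ)+1)) = 0 := by
      rw [← vv_sum_cme K n hn g, wrG_congr K n hG, vv_cob K n hn f]
    have h3 := congrFun h2 ⟨(k0:ℕ)+1, by omega⟩
    rw [Finset.sum_apply, Finset.sum_eq_single k0] at h3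
    · simpa [EE_apply] using h3
    · intro b _ hb
      rw [Pi.smul_apply, EE_apply, if_neg (fun hc => hb (Fin.ext (by simp at hc; omega))),
        smul_zero]
    · intro hk; exact absurd (Finset.mem_univ _) hk
  -- spanning
  have hspan : Submodule.span K (Set.range (fun k : Fin (n - 1) =>
      Submodule.Quotient.mk (p := p) (cc k))) = ⊤ := by
    rw [Submodule.eq_top_iff']
    intro q
    obtain ⟨ψ, rfl⟩ := Submodule.Quotient.mk_surjective p q
    have hψ : IsCocycle K n (ψ : (Fin n → K) →ₗ[K] (Fin n → K) →ₗ[K] (Fin n → K)) := ψ.2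
    have key : Submodule.Quotient.mk (p := p) ψ
        = ∑ k : Fin (n-1), (vv K n (ψ : (Fin n → K) →ₗ[K] (Fin n → K) →ₗ[K] (Fin n → K))
            ⟨(k:ℕ)+1, by omega⟩) • Submodule.Quotient.mk (p := p) (cc k) := by
      have hc1 : (∑ k : Fin (n-1), (vv K n (ψ : (Fin n → K) →ₗ[K] (Fin n → K) →ₗ[K] (Fin n → K))
            ⟨(k:ℕ)+1, by omega⟩) • Submodule.Quotient.mk (p := p) (cc k))
          = Submodule.Quotient.mk (p := p) (∑ k : Fin (n-1),
              (vv K n (ψ : (Fin n → K) →ₗ[K] (Fin n → K) →ₗ[K] (Fin n → K))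
                ⟨(k:ℕ)+1, by omega⟩) • cc k) := by
        rw [← Submodule.mkQ_apply, map_sum]
        simp only [map_smul, Submodule.mkQ_apply]
      rw [hc1, Submodule.Quotient.eq, hp, Submodule.mem_comap]
      have hco : (ZL2 K n).subtype (ψ - ∑ k : Fin (n-1),
            (vv K n (ψ : (Fin n → K) →ₗ[K] (Fin n → K) →ₗ[K] (Fin n → K))
              ⟨(k:ℕ)+1, by omega⟩) • cc k)
          = (ψ : (Fin n → K) →ₗ[K] (Fin n → K) →ₗ[K] (Fin n → K))
            - ∑ k : Fin (n-1), (vv K n (ψ : (Fin n → K) →ₗ[K] (Fin n → K) →ₗ[K] (Fin n → K))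
                ⟨(k:ℕ)+1, by omega⟩) • cme K n ((k:ℕ)+1) := by
        rw [map_sub, map_sum]
        simp only [map_smul]
        rfl
      refine ⟨fB K n (Gof K n (ψ : (Fin n → K) →ₗ[K] (Fin n → K) →ₗ[K] (Fin n → K))), fun x y => ?_⟩
      rw [hco, coc_decomp K n hn _ hψ, dfm_apply]
    rw [key]
    exact Submodule.sum_mem _ fun k _ =>
      Submodule.smul_mem _ _ (Submodule.subset_span ⟨k, rfl⟩)
  refine ⟨?_, cc, hval, hind, hspan⟩
  have bb : Module.Basis (Fin (n-1)) K ((ZL2 K n) ⧸ p) := Module.Basis.mk hind (by rw [hspan])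
  rw [Module.finrank_eq_card_basis bb, Fintype.card_fin]
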